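/- (Kukin's Lemma) Suppose w, u, v are associative Lyndon–Shirshov words and w = a u b v d for some (possibly empty) words a, b, d. Then there exists a Lie bracketing [w]_{u,v} of w of the form [a [u] b [v] d], in which both occurrences u and v appear as bracketed subwords via their standard bracketings, such that the deg-lex leading associative monomial of [w]_{u,v} in k⟨X⟩ equals w. -/

import Mathlib

noncomputable section

variable {X : Type*} [LinearOrder X] (k : Type*) [Field k]

def llt : List X → List X → Prop
  | [], _ => False
  | _ :: _, [] => True
  | a :: u, b :: v => a < b ∨ (a = b ∧ llt u v)

def IsLS (w : List X) : Prop :=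
  w ≠ [] ∧ ∀ u v : List X, u ≠ [] → v ≠ [] → w = u ++ v → llt (v ++ u) w

/-- deg-lex order -/
def dlt (u v : List X) : Prop :=
  u.length < v.length ∨ (u.length = v.length ∧ llt u v)

/-- the free associative algebra with basis the free monoid on X -/
abbrev FA (k : Type*) [Field k] (X : Type*) := MonoidAlgebra k (FreeMonoid X)

/-- the generators x ∈ X inside the free associative algebra -/
def gens : Set (FA k X) := Set.range fun x : X => MonoidAlgebra.single (FreeMonoid.of x) (1 : k)

/-- the leading (deg-lex maximal) monomial of f is w -/
def IsLeading (f : FA k X) (w : List X) : Prop :=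
  f.coeff (FreeMonoid.ofList w) ≠ 0 ∧ ∀ v : List X, f.coeff (FreeMonoid.ofList v) ≠ 0 → v = w ∨ dlt v w

/-- underlying associative word of a nonassociative word -/
def mword : FreeMagma X → List X
  | .of x => [x]
  | .mul a b => mword a ++ mword b

/-- evaluation of a nonassociative word in the free associative algebra
via the commutator bracket -/
def evalM : FreeMagma X → FA k X
  | .of x => MonoidAlgebra.single (FreeMonoid.of x) 1
  | .mul a b => evalM a * evalM b - evalM b * evalM a

/-- nonassociative Lyndon--Shirshov word -/
def IsNLS : FreeMagma X → Prop
  | .of _ => True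
  | .mul a b => IsNLS a ∧ IsNLS b ∧ IsLS (mword a ++ mword b) ∧
      (match a with
        | .of _ => True
        | .mul _ a2 => ¬ llt (mword b) (mword a2))

/-- standard bracketing tree: at each node the right factor is the longest
proper Lyndon--Shirshov suffix -/
def IsStd : FreeMagma X → Prop
  | .of _ => True
  | .mul a b => IsStd a ∧ IsStd b ∧ IsLS (mword a ++ mword b) ∧ IsLS (mword b) ∧
      ∀ s : List X, s ≠ [] → s ≠ mword a ++ mword b → s <:+ mword a ++ mword b →
        IsLS s → s.length ≤ (mword b).length

/-- flattening of a tree of trees -/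
def mjoin : FreeMagma (FreeMagma X) → FreeMagma X
  | .of t => t
  | .mul a b => .mul (mjoin a) (mjoin b)

/-- the list of leaves of a binary tree -/
def leaves {α : Type*} : FreeMagma α → List α
  | .of x => [x]
  | .mul a b => leaves a ++ leaves b

/-- `Occurs s t p` : `s` occurs as a subtree of `t` with exactly the word `p`
to its left -/
def Occurs (s : FreeMagma X) : FreeMagma X → List X → Prop
  | .of x, p => s = .of x ∧ p = []
  | .mul l r, p => (s = .mul l r ∧ p = []) ∨ Occurs s l p ∨
      ∃ q, Occurs s r q ∧ p = mword l ++ q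

/-!
If every node `[p q]` of a bracketing satisfies `llt (q ++ p) (p ++ q)`, then by induction each
commutator is homogeneous with leading monomial `p ++ q`, so the whole bracketing has leading
monomial its underlying word; standard bracketings are of this kind. Starting from the
factorization of `w` into the letters of `a`, `b`, `d` and the blocks `u`, `v`, all of them
Lyndon–Shirshov words, we merge two adjacent factors `p`, `q` with `llt q p`; then `p ++ q` is
again Lyndon–Shirshov. A factorization into at least two factors without such a descent cannot
occur, because `w` lies strictly below its first factor (a proper prefix) and strictly above its
last one (a proper suffix), while the first factor lies weakly below the last.
-/

open OrderDual

theorem llt_iff_map_toDual_lt : ∀ {u v : List X}, llt u v ↔ v.map toDual < u.map toDual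
  | [], v => by simp [llt]
  | _ :: _, [] => by simp [llt]
  | a :: u, b :: v => by
    simp only [llt, List.map_cons, List.cons_lt_cons_iff, toDual_lt_toDual, toDual_inj,
      llt_iff_map_toDual_lt, eq_comm]

theorem llt_trans {u v w : List X} (huv : llt u v) (hvw : llt v w) : llt u w := by
  rw [llt_iff_map_toDual_lt] at *
  exact hvw.trans huv

theorem llt_irrefl (u : List X) : ¬ llt u u := by
  simp [llt_iff_map_toDual_lt]

theorem llt_asymm {u v : List X} (h : llt u v) : ¬ llt v u :=
  fun h' => llt_irrefl u (llt_trans h h')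

theorem llt_trichotomy (u v : List X) : llt u v ∨ u = v ∨ llt v u := by
  simp only [llt_iff_map_toDual_lt]
  rcases lt_trichotomy (v.map toDual) (u.map toDual) with h | h | h
  exacts [.inl h, .inr (.inl (List.map_injective_iff.mpr toDual.injective h).symm), .inr (.inr h)]

theorem llt_append_left_iff (p : List X) {u v : List X} : llt (p ++ u) (p ++ v) ↔ llt u v := by
  induction p with
  | nil => rfl
  | cons a p ih => simp [llt, ih]

theorem llt_append_self (p : List X) {r : List X} (hr : r ≠ []) : llt (p ++ r) p := by
  obtain ⟨a, r, rfl⟩ := List.exists_cons_of_ne_nil hr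
  simpa [llt] using (llt_append_left_iff p).mpr (show llt (a :: r) [] from trivial)

theorem prefix_or_llt_append_of_llt : ∀ {q s : List X}, llt q s →
    s <+: q ∨ ∀ t t' : List X, llt (q ++ t) (s ++ t')
  | _ :: _, [], _ => .inl List.nil_prefix
  | a :: q, b :: s, h => by
    rcases h with h | ⟨rfl, h⟩
    · exact .inr fun _ _ => .inl h
    · exact (prefix_or_llt_append_of_llt h).imp (List.cons_prefix_cons.mpr ⟨rfl, ·⟩)
        fun hq t t' => .inr ⟨rfl, hq t t'⟩

theorem llt_append_of_length_le {q s : List X} (h : llt q s) (hlen : q.length ≤ s.length)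
    (t t' : List X) : llt (q ++ t) (s ++ t') := by
  rcases prefix_or_llt_append_of_llt h with hp | h
  · cases hp.eq_of_length (le_antisymm hp.length_le hlen)
    exact absurd h (llt_irrefl _)
  · exact h t t'

theorem IsLS.llt_of_eq_append {w t s : List X} (hw : IsLS w) (ht : t ≠ []) (hs : s ≠ [])
    (h : w = t ++ s) : llt s w := by
  subst h
  have hrot : llt (s ++ t) (t ++ s) := hw.2 t s ht hs rfl
  rcases llt_trichotomy s (t ++ s) with h | h | h
  · exact h
  · exact absurd (List.self_eq_append_left.mp h) ht
  · -- `s` is then a prefix, `s ++ r = t ++ s`, and the rotations give `llt t r`, whence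
    -- `llt (t ++ s) (r ++ s)`, contradicting `llt (r ++ s) (s ++ r)`.
    rcases prefix_or_llt_append_of_llt h with ⟨r, hr⟩ | h
    · have hr' : r ≠ [] := by rintro rfl; simp_all
      have hlen : t.length = r.length := by
        have := congrArg List.length hr
        simp only [List.length_append] at this
        omega
      have htr : llt t r := (llt_append_left_iff s).mp (hr ▸ hrot)
      have := hw.2 s r hs hr' hr.symm
      exact absurd (llt_append_of_length_le htr hlen.le s s) (llt_asymm (hr ▸ this))
    · exact absurd hrot (llt_asymm (by simpa using h [] t))

theorem isLS_of_forall_llt {w : List X} (hne : w ≠ [])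
    (h : ∀ t s, t ≠ [] → s ≠ [] → w = t ++ s → llt s w) : IsLS w := by
  refine ⟨hne, fun t s ht hs hw => ?_⟩
  simpa [← hw] using llt_append_of_length_le (h t s ht hs hw) (by simp [hw]) t []

theorem isLS_singleton (x : X) : IsLS [x] :=
  isLS_of_forall_llt (List.cons_ne_nil x []) fun t s ht hs h => by
    have := congrArg List.length h
    simp only [List.length_append, List.length_singleton] at this
    have := List.length_pos_iff.mpr ht
    have := List.length_pos_iff.mpr hs
    omega

theorem IsLS.append_of_llt {s t : List X} (hs : IsLS s) (ht : IsLS t) (h : llt t s) :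
    IsLS (s ++ t) := by
  have key : llt t (s ++ t) := by
    rcases prefix_or_llt_append_of_llt h with ⟨z, rfl⟩ | h
    · have hz : z ≠ [] := by rintro rfl; simp [llt_irrefl] at h
      exact (llt_append_left_iff s).mpr (ht.llt_of_eq_append hs.1 hz rfl)
    · simpa using h [] t
  refine isLS_of_forall_llt (by simp [hs.1]) fun x y hx hy hxy => ?_
  rcases List.append_eq_append_iff.mp hxy with ⟨a, rfl, rfl⟩ | ⟨c, rfl, rfl⟩
  · rcases eq_or_ne a [] with rfl | ha
    · simpa using key
    · exact llt_trans (ht.llt_of_eq_append ha hy rfl) key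
  · rcases eq_or_ne c [] with rfl | hc
    · simpa using key
    · exact llt_append_of_length_le (hs.llt_of_eq_append hx hc rfl) (by simp) _ _

-- The right factor of the standard bracketing of `u` is its `llt`-largest proper suffix.
def BoundsProperSuffixes (m u : List X) : Prop :=
  ∀ x y : List X, x ≠ [] → y ≠ [] → u = x ++ y → llt y m ∨ y = m

theorem exists_boundsProperSuffixes {u : List X} (hu : 2 ≤ u.length) :
    ∃ p m, p ≠ [] ∧ m ≠ [] ∧ u = p ++ m ∧ BoundsProperSuffixes m u := by
  obtain ⟨i, hi, hmin⟩ := (Finset.Ico 1 u.length).exists_min_image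
    (fun i => (u.drop i).map toDual) ⟨1, by simp; omega⟩
  rw [Finset.mem_Ico] at hi
  refine ⟨u.take i, u.drop i, List.ne_nil_of_length_pos (by simp; omega),
    List.ne_nil_of_length_pos (by simp; omega), (u.take_append_drop i).symm, ?_⟩
  rintro x y hx hy rfl
  have hle := hmin x.length <| by
    have := List.length_pos_iff.mpr hx
    have := List.length_pos_iff.mpr hy
    simp; omega
  rw [List.drop_left, le_iff_lt_or_eq, ← llt_iff_map_toDual_lt] at hle
  exact hle.imp_right fun h => List.map_injective_iff.mpr toDual.injective h.symm

namespace BoundsProperSuffixes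

variable {p m : List X}

theorem isLS_right (hp : p ≠ []) (hm : m ≠ []) (h : BoundsProperSuffixes m (p ++ m)) :
    IsLS m := by
  refine isLS_of_forall_llt hm fun x y hx hy hxy => ?_
  refine (h (p ++ x) y (by simp [hp]) hy (by simp [hxy])).resolve_right fun hym => ?_
  exact hx (by simpa [hym] using congrArg List.length hxy)

theorem isLS_left (hu : IsLS (p ++ m)) (hp : p ≠ [])
    (h : BoundsProperSuffixes m (p ++ m)) : IsLS p := by
  refine isLS_of_forall_llt hp fun x q hx hq hxq => ?_
  subst hxq
  rcases llt_trichotomy q (x ++ q) with hlt | heq | hgt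
  · exact hlt
  · exact absurd (List.self_eq_append_left.mp heq) hx
  · -- Either `x ++ q = q ++ r`, and then the proper suffix `r ++ m` of `p ++ m` exceeds `m`,
    -- or `llt (x ++ q ++ m) (q ++ m)`; both contradict `hqm`.
    have hqm : llt (q ++ m) (x ++ q ++ m) := by
      simpa using hu.llt_of_eq_append hx (by simp [hq]) (List.append_assoc _ _ _)
    exfalso
    rcases prefix_or_llt_append_of_llt hgt with ⟨r, hr⟩ | hgt
    · have hr' : r ≠ [] := by rintro rfl; simp at hr; exact hx hr
      have hmr : llt m (r ++ m) := by
        simpa only [← hr, List.append_assoc, llt_append_left_iff] using hqm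
      rcases h q (r ++ m) hq (by simp [hr']) (by simp [← hr]) with hlt | heq
      · exact llt_asymm hmr hlt
      · exact absurd (List.self_eq_append_left.mp heq.symm) hr'
    · exact llt_asymm hqm (by simpa using hgt m m)

theorem length_le (hm : m ≠ []) (h : BoundsProperSuffixes m (p ++ m)) {s : List X}
    (hs : IsLS s) (hsuf : s <:+ p ++ m) (hne : s ≠ p ++ m) : s.length ≤ m.length := by
  by_contra! hlen
  obtain ⟨y, rfl⟩ := List.suffix_of_suffix_length_le (List.suffix_append p m) hsuf hlen.le
  have hy : y ≠ [] := by rintro rfl; simp at hlen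
  obtain ⟨x, hx⟩ := hsuf
  have hx' : x ≠ [] := by rintro rfl; exact hne hx
  rcases h x (y ++ m) hx' hs.1 hx.symm with hlt | heq
  · exact llt_asymm (hs.llt_of_eq_append hy hm rfl) hlt
  · simp [heq] at hlen

end BoundsProperSuffixes

theorem exists_isStd {u : List X} (hu : IsLS u) : ∃ t : FreeMagma X, mword t = u ∧ IsStd t := by
  induction hn : u.length using Nat.strong_induction_on generalizing u with
  | _ n ih =>
  rcases lt_or_ge u.length 2 with h1 | h2
  · have := List.length_pos_iff.mpr hu.1
    obtain ⟨x, rfl⟩ := List.length_eq_one_iff.mp (show u.length = 1 by omega)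
    exact ⟨.of x, rfl, trivial⟩
  · obtain ⟨p, m, hp, hm, rfl, hmax⟩ := exists_boundsProperSuffixes h2
    have hmLS := hmax.isLS_right hp hm
    have hlen : p.length < n ∧ m.length < n := by
      have := List.length_pos_iff.mpr hp
      have := List.length_pos_iff.mpr hm
      simp only [← hn, List.length_append]
      omega
    obtain ⟨tp, rfl, htp⟩ := ih _ hlen.1 (hmax.isLS_left hu hp) rfl
    obtain ⟨tm, rfl, htm⟩ := ih _ hlen.2 hmLS rfl
    exact ⟨.mul tp tm, rfl, htp, htm, hu, hmLS,
      fun s _ hne hsuf hs => hmax.length_le hm hs hsuf hne⟩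

def SwapDecreasing : FreeMagma X → Prop
  | .of _ => True
  | .mul a b => SwapDecreasing a ∧ SwapDecreasing b ∧ llt (mword b ++ mword a) (mword a ++ mword b)

theorem mword_ne_nil {α : Type*} : ∀ t : FreeMagma α, mword t ≠ []
  | .of _ => List.cons_ne_nil _ _
  | .mul a _ => by simp [mword, mword_ne_nil a]

theorem IsStd.swapDecreasing : ∀ {t : FreeMagma X}, IsStd t → SwapDecreasing t
  | .of _, _ => trivial
  | .mul a b, ⟨ha, hb, hab, _⟩ => ⟨ha.swapDecreasing, hb.swapDecreasing, hab.2 _ _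
      (mword_ne_nil a) (mword_ne_nil b) rfl⟩

theorem llt_or_eq_append {y m z n : List X} (hlen : y.length = m.length)
    (hy : llt y m ∨ y = m) (hz : llt z n ∨ z = n) : llt (y ++ z) (m ++ n) ∨ y ++ z = m ++ n := by
  rcases hy with hy | rfl
  · exact .inl (llt_append_of_length_le hy hlen.le z n)
  · exact hz.imp (llt_append_left_iff y).mpr (congrArg (y ++ ·))

section Leading

def IsHomogLeading (f : FA k X) (w : List X) : Prop :=
  f.coeff (FreeMonoid.ofList w) ≠ 0 ∧
    ∀ x ∈ f.coeff.support, x.toList.length = w.length ∧ (llt x.toList w ∨ x.toList = w)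

variable {k}

theorem isHomogLeading_single (x : X) :
    IsHomogLeading k (MonoidAlgebra.single (FreeMonoid.of x) 1) [x] := by
  classical
  refine ⟨by simp [MonoidAlgebra.coeff_single], fun y hy => ?_⟩
  rw [MonoidAlgebra.coeff_single, Finsupp.mem_support_single] at hy
  obtain ⟨rfl, -⟩ := hy
  simp

theorem IsHomogLeading.mul {f g : FA k X} {m n : List X} (hf : IsHomogLeading k f m)
    (hg : IsHomogLeading k g n) : IsHomogLeading k (f * g) (m ++ n) := by
  classical
  refine ⟨?_, fun x hx => ?_⟩
  · have huniq : UniqueMul f.coeff.support g.coeff.support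
        (FreeMonoid.ofList m) (FreeMonoid.ofList n) := by
      intro y z hy hz hyz
      have := congrArg FreeMonoid.toList hyz
      simp only [FreeMonoid.toList_mul, FreeMonoid.toList_ofList] at this
      obtain ⟨hym, hzn⟩ := List.append_inj this (hf.2 y hy).1
      exact ⟨(Equiv.symm_apply_eq _).mp hym, (Equiv.symm_apply_eq _).mp hzn⟩
    rw [FreeMonoid.ofList_append, MonoidAlgebra.coeff_mul_mul_of_uniqueMul huniq]
    exact mul_ne_zero hf.1 hg.1
  · obtain ⟨y, hy, z, hz, rfl⟩ :=
      Finset.mem_mul.mp (MonoidAlgebra.support_coeff_mul_subset f g hx)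
    obtain ⟨hym, hy⟩ := hf.2 y hy
    obtain ⟨hzn, hz⟩ := hg.2 z hz
    rw [FreeMonoid.toList_mul]
    exact ⟨by simp [hym, hzn], llt_or_eq_append hym hy hz⟩

theorem IsHomogLeading.commutator {f g : FA k X} {m n : List X} (hf : IsHomogLeading k f m)
    (hg : IsHomogLeading k g n) (hmn : llt (n ++ m) (m ++ n)) :
    IsHomogLeading k (f * g - g * f) (m ++ n) := by
  classical
  have hfg := hf.mul hg
  have hgf := hg.mul hf
  have hgf0 : (g * f).coeff (FreeMonoid.ofList (m ++ n)) = 0 := by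
    by_contra h
    obtain ⟨-, hle⟩ := hgf.2 _ (Finsupp.mem_support_iff.mpr h)
    rw [FreeMonoid.toList_ofList] at hle
    rcases hle with hlt | heq
    · exact llt_asymm hmn hlt
    · exact llt_irrefl _ (heq ▸ hmn)
  refine ⟨?_, fun x hx => ?_⟩
  · rw [MonoidAlgebra.coeff_sub, Finsupp.sub_apply, hgf0, sub_zero]
    exact hfg.1
  rw [MonoidAlgebra.coeff_sub] at hx
  rcases Finset.mem_union.mp (Finsupp.support_sub hx) with hx | hx
  · exact hfg.2 x hx
  · obtain ⟨hlen, hle⟩ := hgf.2 x hx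
    refine ⟨by simp [hlen, add_comm], .inl ?_⟩
    rcases hle with hlt | heq
    · exact llt_trans hlt hmn
    · exact heq ▸ hmn

theorem SwapDecreasing.isHomogLeading :
    ∀ {t : FreeMagma X}, SwapDecreasing t → IsHomogLeading k (evalM k t) (mword t)
  | .of x, _ => isHomogLeading_single x
  | .mul _ _, ⟨ha, hb, hab⟩ => ha.isHomogLeading.commutator hb.isHomogLeading hab

theorem IsHomogLeading.isLeading {f : FA k X} {w : List X} (hf : IsHomogLeading k f w) :
    IsLeading k f w := by
  refine ⟨hf.1, fun v hv => ?_⟩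
  obtain ⟨hlen, hle⟩ := hf.2 _ (Finsupp.mem_support_iff.mpr hv)
  rw [FreeMonoid.toList_ofList] at hlen hle
  exact hle.symm.imp_right fun h => .inr ⟨hlen, h⟩

end Leading

theorem not_isLS_flatten_of_isChain {ws : List (List X)} (hne : ∀ s ∈ ws, s ≠ [])
    (hlen : 2 ≤ ws.length) (hchain : (ws.map (List.map toDual)).IsChain (· ≥ ·)) :
    ¬ IsLS ws.flatten := by
  obtain ⟨a, rest, rfl⟩ := List.exists_cons_of_length_pos (by omega : 0 < ws.length)
  obtain ⟨init, z, rfl⟩ := (List.eq_nil_or_concat rest).resolve_left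
    (by rintro rfl; simp at hlen)
  simp only [List.concat_eq_append] at *
  have ha : a ≠ [] := hne a (by simp)
  have hz : z ≠ [] := hne z (by simp)
  have hza : ¬ llt z a := by
    rw [List.isChain_iff_pairwise, List.pairwise_map] at hchain
    simpa [llt_iff_map_toDual_lt] using List.rel_of_pairwise_cons hchain (by simp : z ∈ init ++ [z])
  intro hw
  have hWa : llt (a :: (init ++ [z])).flatten a := llt_append_self a (by simp [hz])
  have hzW : llt z (a :: (init ++ [z])).flatten :=
    hw.llt_of_eq_append (t := (a :: init).flatten) (by simp [ha]) hz (by simp)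
  exact hza (llt_trans hzW hWa)

theorem exists_bracketing_of_isLS_flatten (L : List (FreeMagma (FreeMagma X))) (hne : L ≠ [])
    (hL : ∀ T ∈ L, SwapDecreasing (mjoin T) ∧ IsLS (mword (mjoin T)))
    (hw : IsLS (L.map (mword ∘ mjoin)).flatten) :
    ∃ T : FreeMagma (FreeMagma X), leaves T = (L.map leaves).flatten ∧
      SwapDecreasing (mjoin T) ∧ mword (mjoin T) = (L.map (mword ∘ mjoin)).flatten := by
  induction hn : L.length using Nat.strong_induction_on generalizing L with
  | _ n ih =>
  rcases lt_or_ge L.length 2 with h1 | h2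
  · have := List.length_pos_iff.mpr hne
    obtain ⟨T, rfl⟩ := List.length_eq_one_iff.mp (show L.length = 1 by omega)
    exact ⟨T, by simp, (hL T (by simp)).1, by simp⟩
  by_cases hchain : ((L.map (mword ∘ mjoin)).map (List.map toDual)).IsChain (· ≥ ·)
  · exact absurd hw (not_isLS_flatten_of_isChain (by simp [mword_ne_nil]) (by simpa) hchain)
  obtain ⟨p, q, L₁, L₂, rfl, hqp⟩ : ∃ p q L₁ L₂, L = L₁ ++ p :: q :: L₂ ∧
      llt (mword (mjoin q)) (mword (mjoin p)) := by
    rw [List.map_map, List.isChain_map, List.isChain_iff_forall_rel_of_append_cons_cons] at hchain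
    push Not at hchain
    obtain ⟨p, q, L₁, L₂, h, hlt⟩ := hchain
    exact ⟨p, q, L₁, L₂, h, llt_iff_map_toDual_lt.mpr hlt⟩
  have hp := hL p (by simp)
  have hq := hL q (by simp)
  have hpq : IsLS (mword (mjoin (.mul p q))) := hp.2.append_of_llt hq.2 hqp
  have hL' : ∀ T ∈ L₁ ++ .mul p q :: L₂, SwapDecreasing (mjoin T) ∧ IsLS (mword (mjoin T)) := by
    intro T hT
    simp only [List.mem_append, List.mem_cons] at hT
    rcases hT with hT | rfl | hT
    · exact hL T (by simp [hT])
    · exact ⟨⟨hp.1, hq.1, hpq.2 _ _ (mword_ne_nil _) (mword_ne_nil _) rfl⟩, hpq⟩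
    · exact hL T (by simp [hT])
  obtain ⟨T, hT⟩ := ih _ (by simp at hn ⊢; omega) (L₁ ++ .mul p q :: L₂) (by simp) hL'
    (by simpa [mjoin, mword] using hw) rfl
  exact ⟨T, by simpa [leaves, mjoin, mword] using hT⟩

/-- Kukin's Lemma: if `w = a ++ u ++ b ++ v ++ d` with `w`, `u`, `v` associative
Lyndon--Shirshov words, then there is a Lie bracketing of `w` of the form
`[a [u] b [v] d]` (the occurrences of `u` and `v` are kept as whole blocks,
bracketed by their standard bracketings) whose deg-lex leading associative
monomial is `w`. -/
theorem stmt_10 {w u v a b d : List X} (hw : IsLS w) (hu : IsLS u) (hv : IsLS v)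
    (hfac : w = a ++ u ++ b ++ v ++ d) :
    ∃ tu tv : FreeMagma X, mword tu = u ∧ IsStd tu ∧ mword tv = v ∧ IsStd tv ∧
      ∃ T : FreeMagma (FreeMagma X),
        leaves T = (a.map FreeMagma.of) ++ [tu] ++ (b.map FreeMagma.of) ++ [tv] ++
          (d.map FreeMagma.of) ∧
        IsLeading k (evalM k (mjoin T)) w := by
  obtain ⟨tu, rfl, htu⟩ := exists_isStd hu
  obtain ⟨tv, rfl, htv⟩ := exists_isStd hv
  refine ⟨tu, tv, rfl, htu, rfl, htv, ?_⟩
  set A := a.map FreeMagma.of ++ [tu] ++ b.map FreeMagma.of ++ [tv] ++ d.map FreeMagma.of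
  have hA : ∀ t ∈ A, SwapDecreasing t ∧ IsLS (mword t) := by
    intro t ht
    simp only [A, List.mem_append, List.mem_map, List.mem_singleton] at ht
    rcases ht with (((⟨x, -, rfl⟩ | rfl) | ⟨x, -, rfl⟩) | rfl) | ⟨x, -, rfl⟩
    · exact ⟨trivial, isLS_singleton x⟩
    · exact ⟨htu.swapDecreasing, hu⟩
    · exact ⟨trivial, isLS_singleton x⟩
    · exact ⟨htv.swapDecreasing, hv⟩
    · exact ⟨trivial, isLS_singleton x⟩
  have hflat : ((A.map .of).map (mword ∘ mjoin)).flatten = w := by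
    simp [A, hfac, Function.comp_def, mjoin, mword, ← List.flatMap_def]
  obtain ⟨T, hleaves, hT, hword⟩ := exists_bracketing_of_isLS_flatten (A.map .of) (by simp [A])
    (by simpa [mjoin] using hA) (hflat ▸ hw)
  refine ⟨T, by simpa [Function.comp_def, leaves, ← List.flatMap_def] using hleaves, ?_⟩
  exact (hword.trans hflat ▸ hT.isHomogLeading).isLeading
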